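/- arXiv:2203.11184 — 6 statements merged into one kernel-verified Lean document; each statement's English description precedes it below -/
import Mathlib

section
/- The function (τ, e) ↦ C_v ( ln(e − (Π/(Γ+1))τ) + (1/Γ) ln τ − ln Γ ), defined for τ > 0 and e > (Π/(Γ+1))τ with fixed constants C_v > 0, Γ > 0, Π ≥ 0, is strictly concave on its domain. -/
/-! In the coordinates `(u, v) = (τ, e − Π/(Γ+1) τ)`, an injective linear change of variables
that maps the domain onto the open quadrant, the entropy is `C_v (Γ⁻¹ ln u + ln v)` up to an
additive constant. A separable sum of strictly concave functions is strictly concave on the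
product of their domains, since two distinct points differ in at least one coordinate, and
strict concavity survives injective linear substitutions and positive rescaling. -/

open Set

section StrictConcave

variable {𝕜 E F β : Type*} [CommSemiring 𝕜] [PartialOrder 𝕜]
  [AddCommMonoid E] [AddCommMonoid F] [Module 𝕜 E] [Module 𝕜 F]
  [AddCommMonoid β] [PartialOrder β] [Module 𝕜 β]

theorem StrictConcaveOn.comp_linearMap {s : Set F} {f : F → β} (hf : StrictConcaveOn 𝕜 s f)
    (g : E →ₗ[𝕜] F) (hg : Function.Injective g) : StrictConcaveOn 𝕜 (g ⁻¹' s) (f ∘ g) :=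
  ⟨hf.1.linear_preimage g, fun x hx y hy hxy a b ha hb hab => by
    simpa only [Function.comp_apply, map_add, map_smul] using hf.2 hx hy (hg.ne hxy) ha hb hab⟩

theorem StrictConcaveOn.smul [PosSMulStrictMono 𝕜 β] {s : Set E} {f : E → β} {c : 𝕜}
    (hc : 0 < c) (hf : StrictConcaveOn 𝕜 s f) : StrictConcaveOn 𝕜 s fun x => c • f x :=
  ⟨hf.1, fun x hx y hy hxy a b ha hb hab =>
    calc a • c • f x + b • c • f y = c • (a • f x + b • f y) := by
          rw [smul_add, smul_comm c, smul_comm c]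
      _ < c • f (a • x + b • y) := smul_lt_smul_of_pos_left (hf.2 hx hy hxy ha hb hab) hc⟩

theorem StrictConcaveOn.comp_fst_add_comp_snd [IsOrderedCancelAddMonoid β]
    {s : Set E} {t : Set F} {f : E → β} {g : F → β}
    (hf : StrictConcaveOn 𝕜 s f) (hg : StrictConcaveOn 𝕜 t g) :
    StrictConcaveOn 𝕜 (s ×ˢ t) fun p => f p.1 + g p.2 := by
  refine ⟨hf.1.prod hg.1, fun x hx y hy hxy a b ha hb hab => ?_⟩
  have hcomb : a • (f x.1 + g x.2) + b • (f y.1 + g y.2)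
      = (a • f x.1 + b • f y.1) + (a • g x.2 + b • g y.2) := by
    rw [smul_add, smul_add, add_add_add_comm]
  rw [hcomb]
  show _ < f (a • x.1 + b • y.1) + g (a • x.2 + b • y.2)
  rcases ne_or_eq x.1 y.1 with h₁ | h₁
  · exact add_lt_add_of_lt_of_le (hf.2 hx.1 hy.1 h₁ ha hb hab)
      (hg.concaveOn.2 hx.2 hy.2 ha.le hb.le hab)
  · have h₂ : x.2 ≠ y.2 := fun h₂ => hxy (Prod.ext h₁ h₂)
    exact add_lt_add_of_le_of_lt (hf.concaveOn.2 hx.1 hy.1 ha.le hb.le hab)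
      (hg.2 hx.2 hy.2 h₂ ha hb hab)

end StrictConcave

section Shear

variable {R : Type*} [CommRing R]

def shear (k : R) : R × R →ₗ[R] R × R :=
  (LinearMap.fst R R R).prod (LinearMap.snd R R R - k • LinearMap.fst R R R)

@[simp]
theorem shear_apply (k : R) (p : R × R) :
    shear k p = (p.1, p.2 - k * p.1) :=
  rfl

theorem shear_injective (k : R) : Function.Injective (shear k) := by
  intro p q h
  simp only [shear_apply, Prod.mk.injEq] at h
  obtain ⟨h₁, h₂⟩ := h
  exact Prod.ext h₁ (by rw [h₁] at h₂; simpa using h₂)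

end Shear

theorem entropy_strictConcaveOn_general (Cv Γ Piv : ℝ)
    (hCv : 0 < Cv) (hΓ : 0 < Γ) :
    StrictConcaveOn ℝ
      {q : ℝ × ℝ | 0 < q.1 ∧ Piv / (Γ + 1) * q.1 < q.2}
      (fun q : ℝ × ℝ =>
        Cv * (Real.log (q.2 - Piv / (Γ + 1) * q.1)
          + (1 / Γ) * Real.log q.1 - Real.log Γ)) := by
  have hquadrant : StrictConcaveOn ℝ (Ioi 0 ×ˢ Ioi 0)
      fun p : ℝ × ℝ => (1 / Γ) • Real.log p.1 + Real.log p.2 :=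
    (strictConcaveOn_log_Ioi.smul (by positivity)).comp_fst_add_comp_snd strictConcaveOn_log_Ioi
  have hentropy :=
    ((hquadrant.comp_linearMap _ (shear_injective (Piv / (Γ + 1)))).smul hCv).add_const
      (-(Cv * Real.log Γ))
  have hdomain : shear (Piv / (Γ + 1)) ⁻¹' (Ioi 0 ×ˢ Ioi 0)
      = {q : ℝ × ℝ | 0 < q.1 ∧ Piv / (Γ + 1) * q.1 < q.2} := by
    ext q
    simp [sub_pos]
  rw [hdomain] at hentropy
  refine hentropy.congr fun q _ => ?_
  simp only [Pi.add_apply, Function.comp_apply, shear_apply, smul_eq_mul]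
  ring

/-- Strict concavity of the SG-gamma specific entropy
(τ,e) ↦ C_v(ln(e − Π/(Γ+1) τ) + (1/Γ) ln τ − ln Γ) on its natural domain. -/
theorem entropy_strictConcaveOn (Cv Γ Piv : ℝ)
    (hCv : 0 < Cv) (hΓ : 0 < Γ) (hPiv : 0 ≤ Piv) :
    StrictConcaveOn ℝ
      {q : ℝ × ℝ | 0 < q.1 ∧ Piv / (Γ + 1) * q.1 < q.2}
      (fun q : ℝ × ℝ =>
        Cv * (Real.log (q.2 - Piv / (Γ + 1) * q.1)
          + (1 / Γ) * Real.log q.1 - Real.log Γ)) :=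
  entropy_strictConcaveOn_general Cv Γ Piv hCv hΓ
end

section
/- For the SG-gamma model with entropy η(u) = −ρ s where s = C_v ln((p+p_∞)/ρ^γ) and p given by the stiffened gas EOS, the entropy potential ψ(u) = f(u)ᵀϑ(u) − q(u) equals ((γ−1)C_v ρ − p_∞ ζ) v, where ζ = (γ−1)C_v ρ/(p + p_∞), f is the Euler flux, q(u) = −ρ s v, and ϑ(u) are the entropy variables ϑ = (γC_v − s − ζ|v|²/2, ζv, −ζ, 0, 0). -/
/-!
The specific entropy `s` cancels between `ϑ₁ ρ v` and `-q = ρ s v`, and the kinetic terms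
`ζ ρ |v|² v` cancel against those of `ρE = ρe + ρ|v|²/2`, leaving `ψ = (γ C_v ρ - ζ ρe) v`.
The stiffened-gas law `p + p_∞ = (γ - 1)(ρe - p_∞)` turns `ζ` into `C_v ρ / (ρe - p_∞)`,
so `ζ ρe = C_v ρ + p_∞ ζ`.
-/

lemma sum_mul_momentum_flux {d : ℕ} (w v : Fin d → ℝ) (ρ p : ℝ) (i : Fin d) :
    ∑ j, w j * (ρ * v j * v i + p * (if i = j then (1:ℝ) else 0))
      = ρ * (∑ j, w j * v j) * v i + p * w i := by
  simp only [mul_add, Finset.sum_add_distrib, mul_ite, mul_one, mul_zero,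
    Finset.sum_ite_eq, Finset.mem_univ, if_true, Finset.mul_sum, Finset.sum_mul]
  rw [mul_comm p]
  congr 1
  exact Finset.sum_congr rfl fun j _ => by ring

lemma stiffenedGas_pressure_add {γ pinf ρe p : ℝ} (hp : p = (γ - 1) * ρe - γ * pinf) :
    p + pinf = (γ - 1) * (ρe - pinf) := by
  rw [hp]; ring

lemma stiffenedGas_zeta_mul {γ Cv pinf ρ ρe p ζ : ℝ} (hγ : 1 < γ) (hρe : pinf < ρe)
    (hp : p = (γ - 1) * ρe - γ * pinf) (hζ : ζ = (γ - 1) * Cv * ρ / (p + pinf)) :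
    ζ * (ρe - pinf) = Cv * ρ := by
  have hpp := stiffenedGas_pressure_add hp
  have hpos : 0 < p + pinf := hpp ▸ mul_pos (by linarith) (by linarith)
  rw [hζ, div_mul_eq_mul_div, div_eq_iff hpos.ne', hpp]
  ring

theorem entropy_potential_formula_general (d : ℕ) (γ Cv pinf ρ : ℝ) (v : Fin d → ℝ)
    (ρe p s ζ ρE ϑ1 : ℝ)
    (hγ : 1 < γ)
    (hρe : pinf < ρe)
    (hp : p = (γ - 1) * ρe - γ * pinf)
    (hρE : ρE = ρe + ρ * (∑ j, (v j)^2) / 2)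
    (hζ : ζ = (γ - 1) * Cv * ρ / (p + pinf))
    (hϑ1 : ϑ1 = γ * Cv - s - ζ * (∑ j, (v j)^2) / 2) :
    ∀ i : Fin d,
      ϑ1 * (ρ * v i)
        + (∑ j, (ζ * v j) * (ρ * v j * v i + p * (if i = j then (1:ℝ) else 0)))
        + (-ζ) * ((ρE + p) * v i)
        - (-(ρ * s * v i))
      = ((γ - 1) * Cv * ρ - pinf * ζ) * v i := by
  intro i
  have hkin : ∑ j, ζ * v j * v j = ζ * ∑ j, (v j)^2 := by
    rw [Finset.mul_sum]; exact Finset.sum_congr rfl fun j _ => by ring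
  rw [sum_mul_momentum_flux (fun j => ζ * v j), hkin, hϑ1, hρE]
  linear_combination (-(v i)) * stiffenedGas_zeta_mul hγ hρe hp hζ

/-- The entropy potential ψ = fᵀϑ − q of the SG-gamma model (pure phase)
equals ((γ−1)C_v ρ − p_∞ ζ) v, componentwise in each space direction. -/
theorem entropy_potential_formula (d : ℕ) (γ Cv pinf ρ : ℝ) (v : Fin d → ℝ)
    (ρe p s ζ ρE ϑ1 : ℝ)
    (hγ : 1 < γ) (hCv : 0 < Cv) (hpinf : 0 ≤ pinf) (hρ : 0 < ρ)
    (hρe : pinf < ρe)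
    (hp : p = (γ - 1) * ρe - γ * pinf)
    (hρE : ρE = ρe + ρ * (∑ j, (v j)^2) / 2)
    (hs : s = Cv * Real.log ((p + pinf) / ρ ^ γ))
    (hζ : ζ = (γ - 1) * Cv * ρ / (p + pinf))
    (hϑ1 : ϑ1 = γ * Cv - s - ζ * (∑ j, (v j)^2) / 2) :
    ∀ i : Fin d,
      ϑ1 * (ρ * v i)
        + (∑ j, (ζ * v j) * (ρ * v j * v i + p * (if i = j then (1:ℝ) else 0)))
        + (-ζ) * ((ρE + p) * v i)
        - (-(ρ * s * v i))
      = ((γ - 1) * Cv * ρ - pinf * ζ) * v i :=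
  entropy_potential_formula_general d γ Cv pinf ρ v ρe p s ζ ρE ϑ1 hγ hρe hp hρE hζ hϑ1
end

section
/- The contact-preserving numerical fluxes h_cp(u⁻,u⁺,n) = (ρ̄ v̄·n, ρ̄ v̄ (v̄·n) + p̄ n, (ρE‾ + p̄) v̄·n, 0, 0) together with nonconservative fluctuations d±_cp = (1/2)(v±·n)(0,0,0,⟦Γ⟧,⟦Π⟧) preserve uniform velocity and pressure: if v⁻ = v⁺ = v and p⁻ = p⁺ = p (with arbitrary jumps in ρ, Γ, Π consistent with the mixture EOS ρE = pΓ + Π + ρ|v|²/2), then the sufficient contact-preservation conditions hold: (i) the momentum flux equals v times the mass flux plus p n; (ii) h^{ρE}_cp − (ρE⁻ + p)(v·n) = (|v|²/2)(h^{ρ}_cp − ρ⁻ v·n) + (p/2)(d⁻_Γ(u⁻,u⁺,n) − d⁺_Γ(u⁺,u⁻,n)) + (1/2)(d⁻_Π(u⁻,u⁺,n) − d⁺_Π(u⁺,u⁻,n)). -/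
theorem cp_flux_contact_preservation_general (d : ℕ) (n v : Fin d → ℝ)
    (ρm ρp Em Ep Γm Γp PiM PiP p : ℝ)
    (hEOSm : ρm * Em = p * Γm + PiM + ρm * (∑ i, (v i)^2) / 2)
    (hEOSp : ρp * Ep = p * Γp + PiP + ρp * (∑ i, (v i)^2) / 2) :
    -- (i) momentum flux = v · (mass flux) + p n
    (∀ i : Fin d,
      (ρp + ρm) / 2 * v i * (∑ j, v j * n j) + p * n i
        = v i * ((ρp + ρm) / 2 * (∑ j, v j * n j)) + p * n i) ∧
    -- (ii) energy flux condition
    ((ρp * Ep + ρm * Em) / 2 + p) * (∑ j, v j * n j)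
        - (ρm * Em + p) * (∑ j, v j * n j)
      = (∑ i, (v i)^2) / 2
          * ((ρp + ρm) / 2 * (∑ j, v j * n j) - ρm * (∑ j, v j * n j))
        + p / 2 * ((1 / 2) * (∑ j, v j * n j) * (Γp - Γm)
            - (1 / 2) * (∑ j, v j * n j) * (Γm - Γp))
        + (1 / 2) * ((1 / 2) * (∑ j, v j * n j) * (PiP - PiM)
            - (1 / 2) * (∑ j, v j * n j) * (PiM - PiP)) := by
  refine ⟨fun i => by ring, ?_⟩
  rw [hEOSm, hEOSp]
  ring

/-- The contact-preserving fluxes together with the nonconservative fluctuations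
satisfy the sufficient conditions for preservation of uniform velocity and
pressure across a material interface. -/
theorem cp_flux_contact_preservation (d : ℕ) (n v : Fin d → ℝ)
    (ρm ρp Em Ep Γm Γp PiM PiP p : ℝ)
    (hρm : 0 < ρm) (hρp : 0 < ρp)
    (hEOSm : ρm * Em = p * Γm + PiM + ρm * (∑ i, (v i)^2) / 2)
    (hEOSp : ρp * Ep = p * Γp + PiP + ρp * (∑ i, (v i)^2) / 2) :
    -- (i) momentum flux = v · (mass flux) + p n
    (∀ i : Fin d,
      (ρp + ρm) / 2 * v i * (∑ j, v j * n j) + p * n i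
        = v i * ((ρp + ρm) / 2 * (∑ j, v j * n j)) + p * n i) ∧
    -- (ii) energy flux condition
    ((ρp * Ep + ρm * Em) / 2 + p) * (∑ j, v j * n j)
        - (ρm * Em + p) * (∑ j, v j * n j)
      = (∑ i, (v i)^2) / 2
          * ((ρp + ρm) / 2 * (∑ j, v j * n j) - ρm * (∑ j, v j * n j))
        + p / 2 * ((1 / 2) * (∑ j, v j * n j) * (Γp - Γm)
            - (1 / 2) * (∑ j, v j * n j) * (Γm - Γp))
        + (1 / 2) * ((1 / 2) * (∑ j, v j * n j) * (PiP - PiM)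
            - (1 / 2) * (∑ j, v j * n j) * (PiM - PiP)) :=
  cp_flux_contact_preservation_general d n v ρm ρp Em Ep Γm Γp PiM PiP p hEOSm hEOSp
end

section
/- In the HLLC solver for the SG-gamma model, if p_L = p_R = p and v_L·n = v_R·n = u (uniform pressure and normal velocity), then the intermediate pressure and contact speed are p* = p and s* = u, so an isolated material interface is exactly preserved. -/
/-! With equal states on both sides the correction terms `Q_R Q_L (u_L - u_R)` and
`p_L - p_R` vanish, so `p*` and `s*` reduce to `Q`-weighted averages of equal values;
the weights are positive mass fluxes, so their sum is a nonzero denominator. -/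

lemma weighted_average_self {a b : ℝ} (x : ℝ) (hab : a + b ≠ 0) :
    (a * x + b * x) / (a + b) = x := by
  rw [← add_mul, mul_div_cancel_left₀ x hab]

lemma massFlux_add_ne_zero {ρL ρR u sL sR : ℝ} (hρL : 0 < ρL) (hρR : 0 < ρR)
    (hsL : sL < u) (hsR : u < sR) : ρL * (u - sL) + ρR * (sR - u) ≠ 0 :=
  (add_pos (mul_pos hρL (sub_pos.mpr hsL)) (mul_pos hρR (sub_pos.mpr hsR))).ne'

/-- HLLC preserves isolated material interfaces: if p_L = p_R = p and
u_L = u_R = u, then p* = p and s* = u. -/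
theorem hllc_contact_preservation (ρL ρR u p sL sR : ℝ)
    (hρL : 0 < ρL) (hρR : 0 < ρR) (hsL : sL < u) (hsR : u < sR) :
    (ρL * (u - sL) * p + ρR * (sR - u) * p
        + ρR * (sR - u) * (ρL * (u - sL)) * (u - u))
      / (ρL * (u - sL) + ρR * (sR - u)) = p ∧
    (ρL * (u - sL) * u + ρR * (sR - u) * u + p - p)
      / (ρL * (u - sL) + ρR * (sR - u)) = u := by
  have hQ := massFlux_add_ne_zero hρL hρR hsL hsR
  rw [sub_self, mul_zero, add_zero, add_sub_cancel_right]
  exact ⟨weighted_average_self p hQ, weighted_average_self u hQ⟩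
end

section
/- Positivity of the left HLLC intermediate internal energy: for a stiffened gas with γ_L > 1, p_L + p_{∞L} > 0, ρ_L > 0, the quadratic inequality (u_L − s_L)(ρ_L/2)σ² + (p_L + p_{∞L})σ + (u_L − s_L)(p_L + p_{∞L})/(γ_L − 1) > 0 holds for all σ ∈ ℝ provided the wave speed estimate satisfies s_L < u_L − c_L √((γ_L−1)/(2γ_L)), where c_L = √(γ_L(p_L + p_{∞L})/ρ_L); equivalently the discriminant (p_L+p_{∞L})² − 2ρ_L(u_L − s_L)²(p_L+p_{∞L})/(γ_L−1) is negative. -/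
/-!
The wave-speed estimate says `u_L - s_L > √(P (γ - 1) / (2 ρ))` with `P = p_L + p_∞`, i.e.
`(u_L - s_L)² > P (γ - 1) / (2 ρ)`, which is exactly negativity of the discriminant of the
quadratic in `σ`. Its leading coefficient `(u_L - s_L) ρ / 2` is positive, so the quadratic has
no real root and is positive everywhere.
-/

open Real

theorem quadratic_pos_of_discrim_neg {K : Type*} [Field K] [LinearOrder K] [IsStrictOrderedRing K]
    {a b c : K} (ha : 0 < a) (h : discrim a b c < 0) (x : K) :
    0 < a * (x * x) + b * x + c := by
  have hsq : 4 * a * (a * (x * x) + b * x + c) = (2 * a * x + b) ^ 2 - discrim a b c := by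
    unfold discrim; ring
  have : 0 < 4 * a * (a * (x * x) + b * x + c) := by
    rw [hsq]; nlinarith [sq_nonneg (2 * a * x + b)]
  exact pos_of_mul_pos_right this (by positivity)

theorem lt_sq_sub_of_lt_sub_sqrt {x u s : ℝ} (h : s < u - √x) : x < (u - s) ^ 2 :=
  (sqrt_lt' (by linarith [sqrt_nonneg x])).1 (by linarith)

theorem sqrt_mul_sqrt_sub_one_div {γ P ρ : ℝ} (hγ : γ ≠ 0) (h : 0 ≤ γ * P / ρ) :
    √(γ * P / ρ) * √((γ - 1) / (2 * γ)) = √(P * (γ - 1) / (2 * ρ)) := by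
  rw [← sqrt_mul h]
  congr 1
  field_simp

theorem discrim_hllc (d ρ P γ : ℝ) :
    discrim (d * (ρ / 2)) P (d * (P / (γ - 1))) = P ^ 2 - 2 * ρ * d ^ 2 * (P / (γ - 1)) := by
  unfold discrim; ring

theorem hllc_discrim_neg {d ρ P γ : ℝ} (hγ : 1 < γ) (hρ : 0 < ρ) (hP : 0 < P)
    (h : P * (γ - 1) / (2 * ρ) < d ^ 2) :
    P ^ 2 - 2 * ρ * d ^ 2 * (P / (γ - 1)) < 0 := by
  have hγ1 : γ - 1 ≠ 0 := by linarith
  have hfactor : P ^ 2 - 2 * ρ * d ^ 2 * (P / (γ - 1))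
      = 2 * ρ * P / (γ - 1) * (P * (γ - 1) / (2 * ρ) - d ^ 2) := by
    field_simp
  rw [hfactor]
  exact mul_neg_of_pos_of_neg (div_pos (by positivity) (by linarith)) (by linarith)

theorem hllc_internal_energy_pos_general (γ pinf ρL pL uL sL : ℝ)
    (hγ : 1 < γ) (hρ : 0 < ρL) (hp : 0 < pL + pinf)
    (hsL : sL < uL - Real.sqrt (γ * (pL + pinf) / ρL) * Real.sqrt ((γ - 1) / (2 * γ))) :
    (∀ σ : ℝ,
      0 < (uL - sL) * (ρL / 2) * σ^2 + (pL + pinf) * σ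
            + (uL - sL) * ((pL + pinf) / (γ - 1))) ∧
    (pL + pinf)^2 - 2 * ρL * (uL - sL)^2 * ((pL + pinf) / (γ - 1)) < 0 := by
  rw [sqrt_mul_sqrt_sub_one_div (by positivity) (by positivity)] at hsL
  have hd : 0 < uL - sL := by linarith [sqrt_nonneg ((pL + pinf) * (γ - 1) / (2 * ρL))]
  have hdisc := hllc_discrim_neg hγ hρ hp (lt_sq_sub_of_lt_sub_sqrt hsL)
  refine ⟨fun σ => ?_, hdisc⟩
  rw [sq σ]
  exact quadratic_pos_of_discrim_neg (by positivity) ((discrim_hllc ..).trans_lt hdisc) σ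

/-- Positivity of the left HLLC intermediate internal energy: under the wave
speed estimate s_L < u_L − c_L √((γ−1)/(2γ)), the quadratic in σ is positive
for all σ, equivalently the discriminant is negative. -/
theorem hllc_internal_energy_pos (γ pinf ρL pL uL sL : ℝ)
    (hγ : 1 < γ) (hpinf : 0 ≤ pinf) (hρ : 0 < ρL) (hp : 0 < pL + pinf)
    (hsL : sL < uL - Real.sqrt (γ * (pL + pinf) / ρL) * Real.sqrt ((γ - 1) / (2 * γ))) :
    (∀ σ : ℝ,
      0 < (uL - sL) * (ρL / 2) * σ^2 + (pL + pinf) * σ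
            + (uL - sL) * ((pL + pinf) / (γ - 1))) ∧
    (pL + pinf)^2 - 2 * ρL * (uL - sL)^2 * ((pL + pinf) / (γ - 1)) < 0 :=
  hllc_internal_energy_pos_general γ pinf ρL pL uL sL hγ hρ hp hsL
end

section
/- If a three-point scheme U_j^{n+1} = U_j^n − (Δt/h)(D⁻(U_j^n, U_{j+1}^n, n) + D⁺(U_{j−1}^n, U_j^n, n)) with consistent fluctuations (D±(u,u,n) = 0 for D± minus/plus the flux differences) satisfies the discrete entropy inequality η(U_j^{n+1}) ≤ η(U_j^n) − (Δt/h)(Q(U_j^n,U_{j+1}^n,n) − Q(U_{j−1}^n,U_j^n,n)) for all data, with η differentiable, then in the limit Δt → 0⁺ the fluctuations are entropy stable: ϑ(u_L)·D⁻(u_L,u_R,n) + ϑ(u_R)·D⁺(u_L,u_R,n) ≥ q(u_R)·n − q(u_L)·n, where ϑ = ∇η and Q is a consistent entropy flux (Q(u,u,n) = q(u)·n). -/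
/-!
Apply the discrete entropy inequality to Riemann data `uL | uR` at the two cells adjacent to the
jump. By consistency only one fluctuation survives in each cell, and summing the two inequalities
the interface entropy flux `Q uL uR` cancels, leaving
`η (uL - λ D⁻) + η (uR - λ D⁺) + λ (q uR - q uL) ≤ η uL + η uR` for every `λ > 0`.
Dividing by `λ` and letting `λ → 0⁺` turns the left-hand entropy defect into its derivative at
`λ = 0`, which is `⟪∇η uL, D⁻⟫ + ⟪∇η uR, D⁺⟫`.
-/

open scoped RealInnerProductSpace
open Filter Topology

theorem HasDerivAt.le_of_forall_pos_mul_le {F : ℝ → ℝ} {F' c : ℝ} (hF : HasDerivAt F F' 0)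
    (hle : ∀ t : ℝ, 0 < t → F 0 + t * c ≤ F t) : c ≤ F' := by
  have hslope : Tendsto (slope F 0) (𝓝[>] 0) (𝓝 F') :=
    (hasDerivAt_iff_tendsto_slope.mp hF).mono_left (nhdsWithin_mono 0 fun _ ht => ne_of_gt ht)
  refine ge_of_tendsto hslope ?_
  filter_upwards [self_mem_nhdsWithin] with t (ht : 0 < t)
  rw [slope_def_field, sub_zero, le_div_iff₀ ht]
  linarith [hle t ht]

section Fluctuations

variable {E : Type*} [NormedAddCommGroup E] [InnerProductSpace ℝ E]

theorem hasDerivAt_comp_sub_smul_zero [CompleteSpace E] {f : E → ℝ} {u : E}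
    (hf : DifferentiableAt ℝ f u) (v : E) :
    HasDerivAt (fun t : ℝ => f (u - t • v)) (-⟪gradient f u, v⟫) 0 := by
  have hline : HasDerivAt (fun t : ℝ => u - t • v) (-v) 0 := by
    simpa using ((hasDerivAt_id (0 : ℝ)).smul_const v).const_sub u
  have hf' : HasFDerivAt f (InnerProductSpace.toDual ℝ E (gradient f u)) (u - (0 : ℝ) • v) := by
    simpa using hf.hasGradientAt.hasFDerivAt
  simpa [Function.comp_def] using hf'.comp_hasDerivAt (0 : ℝ) hline

def riemannData (uL uR : E) : ℤ → E := fun j => if j ≤ 0 then uL else uR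

theorem entropy_sum_le_of_riemannData (η q : E → ℝ) (Dm Dp : E → E → E) (Q : E → E → ℝ)
    (hDm : ∀ u, Dm u u = 0) (hDp : ∀ u, Dp u u = 0) (hQ : ∀ u, Q u u = q u)
    {lam : ℝ} (uL uR : E) (hcell : ∀ j : ℤ,
      η (riemannData uL uR j - lam • (Dm (riemannData uL uR j) (riemannData uL uR (j + 1))
          + Dp (riemannData uL uR (j - 1)) (riemannData uL uR j)))
        ≤ η (riemannData uL uR j) - lam * (Q (riemannData uL uR j) (riemannData uL uR (j + 1))
          - Q (riemannData uL uR (j - 1)) (riemannData uL uR j))) :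
    η (uL - lam • Dm uL uR) + η (uR - lam • Dp uL uR) + lam * (q uR - q uL) ≤ η uL + η uR := by
  have hleft := hcell 0
  have hright := hcell 1
  norm_num [riemannData, hDp, hDm, hQ] at hleft hright
  linarith

end Fluctuations

/-- If a consistent three-point fluctuation scheme satisfies a discrete entropy
inequality for all data and all mesh ratios, then the fluctuations are entropy
stable: ϑ(u_L)·D⁻ + ϑ(u_R)·D⁺ ≥ q(u_R)·n − q(u_L)·n (with n fixed,
q here denotes u ↦ q(u)·n). -/
theorem entropy_inequality_implies_entropy_stable_fluctuations
    {m : ℕ} (η q : EuclideanSpace ℝ (Fin m) → ℝ)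
    (Dm Dp : EuclideanSpace ℝ (Fin m) → EuclideanSpace ℝ (Fin m) →
      EuclideanSpace ℝ (Fin m))
    (Q : EuclideanSpace ℝ (Fin m) → EuclideanSpace ℝ (Fin m) → ℝ)
    (hη : ∀ u, DifferentiableAt ℝ η u)
    (hDm : ∀ u, Dm u u = 0) (hDp : ∀ u, Dp u u = 0)
    (hQ : ∀ u, Q u u = q u)
    (hscheme : ∀ lam : ℝ, 0 < lam → ∀ U : ℤ → EuclideanSpace ℝ (Fin m), ∀ j : ℤ,
      η (U j - lam • (Dm (U j) (U (j + 1)) + Dp (U (j - 1)) (U j)))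
        ≤ η (U j) - lam * (Q (U j) (U (j + 1)) - Q (U (j - 1)) (U j))) :
    ∀ uL uR : EuclideanSpace ℝ (Fin m),
      ⟪gradient η uL, Dm uL uR⟫ + ⟪gradient η uR, Dp uL uR⟫
        ≥ q uR - q uL := by
  intro uL uR
  let defect : ℝ → ℝ := fun lam =>
    η uL + η uR - (η (uL - lam • Dm uL uR) + η (uR - lam • Dp uL uR))
  have hderiv : HasDerivAt defect (⟪gradient η uL, Dm uL uR⟫ + ⟪gradient η uR, Dp uL uR⟫) 0 := by
    refine (((hasDerivAt_comp_sub_smul_zero (hη uL) (Dm uL uR)).add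
      (hasDerivAt_comp_sub_smul_zero (hη uR) (Dp uL uR))).const_sub (η uL + η uR)).congr_deriv ?_
    ring
  refine hderiv.le_of_forall_pos_mul_le fun lam hlam => ?_
  have hsum := entropy_sum_le_of_riemannData η q Dm Dp Q hDm hDp hQ uL uR
    (hscheme lam hlam (riemannData uL uR))
  simp only [defect, zero_smul, sub_zero, sub_self]
  linarith
end
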